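/- Subadditivity of the isoperimetric profile against the profile at infinity: Let (X, d, μ) be a noncompact metric measure space satisfying the cut property, and assume the isoperimetric profile I_X is lower semicontinuous on (0, μ(X)). Then for every V ∈ (0, μ(X)) and all V_1, V_2 ≥ 0 with V_1 + V_2 = V one has I_X(V) ≤ I_X(V_1) + I^∞_X(V_2) (with the conventions I_X(0) := 0 and I^∞_X(0) := 0). -/

import Mathlib

open Filter MeasureTheory Metric Set Topology
open scoped ENNReal NNReal

noncomputable section

variable {X : Type*} [MetricSpace X] [MeasurableSpace X]

/-- `u` is locally Lipschitz on the set `A`. -/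
def LocLipschitzOn (u : X → ℝ) (A : Set X) : Prop :=
  ∀ x ∈ A, ∃ K : NNReal, ∃ t ∈ 𝓝[A] x, LipschitzOnWith K u t

/-- The slope `lip u (x)` of `u` at `x` (equal to `0` at isolated points). -/
def lipSlope (u : X → ℝ) (x : X) : ℝ≥0∞ :=
  Filter.limsup (fun y => ENNReal.ofReal (|u y - u x| / dist y x)) (𝓝[≠] x)

/-- Convergence `u i → f` in `L¹(B, μ)`. -/
def TendstoL1On (μ : Measure X) (B : Set X) (u : ℕ → X → ℝ) (f : X → ℝ) : Prop :=
  Tendsto (fun i => ∫⁻ x in B, ENNReal.ofReal |u i x - f x| ∂μ) atTop (𝓝 0)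

/-- Convergence `u i → f` in `L¹_loc(A, μ)`, i.e. in `L¹(K, μ)` for every compact `K ⊆ A`. -/
def TendstoL1LocOn (μ : Measure X) (A : Set X) (u : ℕ → X → ℝ) (f : X → ℝ) : Prop :=
  ∀ K : Set X, K ⊆ A → IsCompact K → TendstoL1On μ K u f

/-- The relative perimeter `P(E, A)` of a Borel set `E` in an open set `A`. -/
def perim (μ : Measure X) (E A : Set X) : ℝ≥0∞ :=
  ⨅ (u : ℕ → X → ℝ) (_ : ∀ i, LocLipschitzOn (u i) A)
    (_ : TendstoL1LocOn μ A u (E.indicator 1)),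
    Filter.liminf (fun i => ∫⁻ x in A, lipSlope (u i) x ∂μ) atTop

/-- The perimeter `P(E) := P(E, X)`. -/
def Perim (μ : Measure X) (E : Set X) : ℝ≥0∞ := perim μ E Set.univ

/-- The isoperimetric profile `I_X`. -/
def isoProfile (μ : Measure X) (V : ℝ) : ℝ≥0∞ :=
  ⨅ (E : Set X) (_ : MeasurableSet E) (_ : μ E = ENNReal.ofReal V), Perim μ E

/-- The measure is finite on bounded sets. -/
def FiniteOnBounded (μ : Measure X) : Prop :=
  ∀ s : Set X, Bornology.IsBounded s → μ s < ⊤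

/-- The support of the measure is the whole space. -/
def FullSupport (μ : Measure X) : Prop :=
  ∀ (x : X) (r : ℝ), 0 < r → 0 < μ (ball x r)

/-- (H1) BV compactness. -/
def BVCompactness (μ : Measure X) : Prop :=
  ∀ E : ℕ → Set X, (∀ i, MeasurableSet (E i)) →
    (∃ M : ℝ≥0∞, M ≠ ⊤ ∧ ∀ i, μ (E i) + Perim μ (E i) ≤ M) →
    ∃ φ : ℕ → ℕ, StrictMono φ ∧ ∃ F : Set X, MeasurableSet F ∧
      ∀ (x : X) (r : ℝ), 0 < r →
        TendstoL1On μ (ball x r) (fun k => (E (φ k)).indicator 1) (F.indicator 1)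

/-- (H2) Cut property. -/
def CutProperty (μ : Measure X) : Prop :=
  ∀ E : Set X, MeasurableSet E → Perim μ E ≠ ⊤ → ∀ o : X,
    ∀ᵐ r ∂(volume.restrict (Set.Ioi (0:ℝ))),
      Perim μ (E ∩ ball o r) ≤ perim μ E (ball o r) +
          ENNReal.ofReal (deriv (fun s => (μ (E ∩ ball o s)).toReal) r) ∧
      Perim μ (E \ ball o r) ≤ perim μ E (closure (ball o r))ᶜ +
          ENNReal.ofReal (deriv (fun s => (μ (E ∩ ball o s)).toReal) r)

/-- (H3) The perimeter of balls of radius `r` vanishes uniformly as `r → 0⁺`. -/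
def SmallBallPerimeter (μ : Measure X) : Prop :=
  Tendsto (fun r : ℝ => ⨆ x : X, Perim μ (ball x r)) (𝓝[>] 0) (𝓝 0)

/-- (H4) Continuity of the volume of balls. -/
def BallVolContinuous (μ : Measure X) : Prop :=
  ∀ x : X, ContinuousOn (fun r : ℝ => (μ (ball x r)).toReal) (Set.Ioi (0:ℝ))

/-- (H5) `μ` is uniformly locally doubling. -/
def UnifLocDoubling (μ : Measure X) : Prop :=
  ∀ R : ℝ, 0 < R → ∃ C : ℝ≥0∞, C ≠ ⊤ ∧
    ∀ (x : X) (r : ℝ), 0 < r → r ≤ R → μ (ball x (2*r)) ≤ C * μ (ball x r)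

/-- The isoperimetric profile at infinity `I^∞_X`. -/
def isoProfileAtInfty (μ : Measure X) (V : ℝ) : ℝ≥0∞ :=
  ⨅ (E : ℕ → Set X) (_ : ∀ i, MeasurableSet (E i))
    (_ : Tendsto (fun i => μ (E i)) atTop (𝓝 (ENNReal.ofReal V)))
    (_ : ∀ (x : X) (r : ℝ), 0 < r → ∀ᶠ i in atTop, E i ∩ ball x r = ∅),
    Filter.liminf (fun i => Perim μ (E i)) atTop

/-- The isoperimetric profile at infinity volumewise `Ĩ^∞_X`. -/
def isoProfileAtInftyVol (μ : Measure X) (V : ℝ) : ℝ≥0∞ :=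
  ⨅ (E : ℕ → Set X) (_ : ∀ i, MeasurableSet (E i))
    (_ : Tendsto (fun i => μ (E i)) atTop (𝓝 (ENNReal.ofReal V)))
    (_ : ∀ (x : X) (r : ℝ), 0 < r →
      Tendsto (fun i => μ (E i ∩ ball x r)) atTop (𝓝 0)),
    Filter.liminf (fun i => Perim μ (E i)) atTop

/-- The open interval `(0, μ(X))` of admissible volumes. -/
def profileDomain (μ : Measure X) : Set ℝ :=
  {V : ℝ | 0 < V ∧ ENNReal.ofReal V < μ Set.univ}

/-! Take `E` almost optimal for `I(V₁)` and `Fᵢ` almost optimal for `I^∞(V₂)`. Since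
`m(r) = μ(E ∩ B_r(o))` is monotone and bounded, `m'` is small at arbitrarily large radii,
and there the cut property gives `P(E ∩ B_r(o)) ≤ P(E) + ε`. The bounded set `E ∩ B_r(o)`
is eventually disjoint from the escaping sets `Fᵢ`, so the perimeter of `E ∩ B_r(o) ∪ Fᵢ`
is at most `P(E ∩ B_r(o)) + P(Fᵢ)`, while its volume tends to `m(r) + V₂`; and `m(r) → V₁`
as `r → ∞`. Lower semicontinuity of `I_X`, applied once in each limit, gives
`I(V) ≤ P(E) + ε + lim inf P(Fᵢ)`. -/

theorem ENNReal.le_add_of_forall_lt {a b c : ℝ≥0∞}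
    (h : ∀ a' > a, ∀ b' > b, c ≤ a' + b') : c ≤ a + b := by
  refine ENNReal.le_of_forall_pos_le_add fun ε hε hab => ?_
  have hε2 : (ε / 2 : ℝ≥0∞) ≠ 0 := by simpa using hε.ne'
  calc c ≤ (a + ε / 2) + (b + ε / 2) :=
        h _ (ENNReal.lt_add_right (ENNReal.add_lt_top.1 hab).1.ne hε2)
          _ (ENNReal.lt_add_right (ENNReal.add_lt_top.1 hab).2.ne hε2)
    _ = a + b + ε := by rw [add_add_add_comm, ENNReal.add_halves]

theorem ENNReal.limsup_add_le' {ι : Type*} (l : Filter ι) (f g : ι → ℝ≥0∞) :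
    limsup (fun i => f i + g i) l ≤ limsup f l + limsup g l := by
  refine ENNReal.le_add_of_forall_lt fun a ha b hb => limsup_le_of_le (by isBoundedDefault) ?_
  filter_upwards [eventually_lt_of_limsup_lt ha, eventually_lt_of_limsup_lt hb] with i hfi hgi
  exact (ENNReal.add_lt_add hfi hgi).le

theorem IsOpen.lowerSemicontinuous_iSup {α β : Type*} [TopologicalSpace α]
    [CompleteLinearOrder β] [TopologicalSpace β] [OrderTopology β] {p : α → Prop}
    (hp : IsOpen {x | p x}) {f : α → β} (hf : ContinuousOn f {x | p x}) :
    LowerSemicontinuous fun x => ⨆ _ : p x, f x := by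
  intro x c (hc : c < ⨆ _ : p x, f x)
  by_cases hx : p x
  · rw [iSup_pos hx] at hc
    filter_upwards [hp.mem_nhds hx, (hf.continuousAt (hp.mem_nhds hx)).eventually
      (lt_mem_nhds hc)] with y hy hcy
    show c < ⨆ _ : p y, f y
    rwa [iSup_pos hy]
  · simp [hx] at hc

theorem LowerSemicontinuousOn.le_liminf_comp {α β ι : Type*} [TopologicalSpace α]
    [CompleteLinearOrder β] [TopologicalSpace β] [OrderTopology β] {f : α → β} {s : Set α}
    (hf : LowerSemicontinuousOn f s) {x : α} (hx : x ∈ s) {l : Filter ι} {y : ι → α}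
    (hys : ∀ᶠ i in l, y i ∈ s) (hy : Tendsto y l (𝓝 x)) :
    f x ≤ liminf (fun i => f (y i)) l :=
  (lowerSemicontinuousWithinAt_iff_le_liminf.1 (hf x hx)).trans
    (liminf_le_liminf_of_le (tendsto_nhdsWithin_iff.2 ⟨hy, hys⟩))

theorem Monotone.exists_gt_mem_deriv_le {m : ℝ → ℝ} (hm : Monotone m)
    (hbdd : BddAbove (range m)) {R : ℝ} {S : Set ℝ}
    (hS : ∀ᵐ r ∂volume.restrict (Ioi R), r ∈ S) {ε : ℝ} (hε : 0 < ε) :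
    ∃ r, R < r ∧ r ∈ S ∧ deriv m r ≤ ε := by
  by_contra! hcon
  obtain ⟨M, hM⟩ := hbdd
  -- On `(R, T]` we would have `ε (T - R) ≤ ∫ m' ≤ M - m R`, false for this `T`.
  set T := R + (M - m R) / ε + 1
  set D := Ioc R T ∩ {r | DifferentiableAt ℝ m r}
  have hD : MeasurableSet D := measurableSet_Ioc.inter (measurableSet_of_differentiableAt ℝ m)
  have hupper : ∫⁻ r in D, ENNReal.ofReal (deriv m r) ≤ ENNReal.ofReal (M - m R) := by
    rw [lintegral_deriv_eq_volume_image_of_monotoneOn hD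
      (fun r hr => hr.2.hasDerivAt.hasDerivWithinAt) (hm.monotoneOn D), ← Real.volume_Icc]
    exact measure_mono (image_subset_iff.2 fun r hr => ⟨hm hr.1.1.le, hM (mem_range_self r)⟩)
  have hlower : ENNReal.ofReal (ε * (T - R)) ≤ ∫⁻ r in D, ENNReal.ofReal (deriv m r) := by
    rw [ENNReal.ofReal_mul hε.le, ← Real.volume_Ioc,
      ← measure_inter_conull hm.ae_differentiableAt, ← setLIntegral_const]
    refine setLIntegral_mono_ae (by fun_prop) ?_
    filter_upwards [(ae_restrict_iff' measurableSet_Ioi).1 hS] with r hrS hrD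
    exact ENNReal.ofReal_le_ofReal (hcon r hrD.1.1 (hrS hrD.1.1)).le
  have hTR : ε * (T - R) = M - m R + ε := by
    simp only [T]
    field_simp
    ring
  have := (ENNReal.ofReal_le_ofReal_iff (sub_nonneg.2 (hM (mem_range_self R)))).1
    (hlower.trans hupper)
  linarith

theorem LocLipschitzOn.continuousOn {X : Type*} [MetricSpace X] {u : X → ℝ} {A : Set X}
    (hu : LocLipschitzOn u A) : ContinuousOn u A := fun x hx => by
  obtain ⟨K, t, ht, hK⟩ := hu x hx
  exact (hK.continuousOn x (mem_of_mem_nhdsWithin hx ht)).mono_of_mem_nhdsWithin ht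

theorem LocLipschitzOn.mono {X : Type*} [MetricSpace X] {u : X → ℝ} {A B : Set X}
    (hu : LocLipschitzOn u A) (hBA : B ⊆ A) : LocLipschitzOn u B := fun x hx => by
  obtain ⟨K, t, ht, hK⟩ := hu x (hBA hx)
  exact ⟨K, t, nhdsWithin_mono x hBA ht, hK⟩

theorem LocLipschitzOn.add {X : Type*} [MetricSpace X] {u v : X → ℝ} {A : Set X}
    (hu : LocLipschitzOn u A) (hv : LocLipschitzOn v A) :
    LocLipschitzOn (fun x => u x + v x) A := fun x hx => by
  obtain ⟨K, s, hs, hK⟩ := hu x hx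
  obtain ⟨L, t, ht, hL⟩ := hv x hx
  exact ⟨K + L, s ∩ t, inter_mem hs ht,
    (hK.mono inter_subset_left).add (hL.mono inter_subset_right)⟩

theorem lipSlope_add_le {X : Type*} [MetricSpace X] (u v : X → ℝ) (x : X) :
    lipSlope (fun y => u y + v y) x ≤ lipSlope u x + lipSlope v x := by
  refine (limsup_le_limsup (Eventually.of_forall fun y => ?_)).trans
    (ENNReal.limsup_add_le' _ _ _)
  refine (ENNReal.ofReal_le_ofReal ?_).trans ENNReal.ofReal_add_le
  rw [← add_div, add_sub_add_comm]
  gcongr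
  exact abs_add_le _ _

theorem measurable_lipSlope [BorelSpace X] {u : X → ℝ} (hu : Continuous u) :
    Measurable (lipSlope u) := by
  have hrepr : lipSlope u = fun x => ⨅ n : ℕ, ⨆ y ∈ ball x (1 / ((n : ℝ) + 1)) ∩ {x}ᶜ,
      ENNReal.ofReal (|u y - u x| / dist y x) := by
    ext x
    simp only [lipSlope, (nhdsWithin_hasBasis nhds_basis_ball_inv_nat_succ _).limsup_eq_iInf_iSup,
      iInf_true]
  rw [hrepr]
  refine Measurable.iInf fun n => (lowerSemicontinuous_iSup fun y => ?_).measurable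
  have hU : {x | y ∈ ball x (1 / ((n : ℝ) + 1)) ∩ {x}ᶜ} =
      ball y (1 / ((n : ℝ) + 1)) ∩ {y}ᶜ := by
    ext x
    simp [dist_comm, eq_comm]
  refine IsOpen.lowerSemicontinuous_iSup (hU ▸ isOpen_ball.inter isOpen_compl_singleton) ?_
  rw [hU]
  exact ENNReal.continuous_ofReal.comp_continuousOn
    (ContinuousOn.div (by fun_prop) (by fun_prop) fun x hx => dist_ne_zero.2 (Ne.symm hx.2))

theorem TendstoL1On.add {X : Type*} [MeasurableSpace X] {μ : Measure X} {B : Set X}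
    {u v : ℕ → X → ℝ} {f g : X → ℝ}
    (hu : TendstoL1On μ B u f) (hv : TendstoL1On μ B v g) (hum : ∀ i, Measurable (u i))
    (hf : Measurable f) : TendstoL1On μ B (fun i x => u i x + v i x) (f + g) := by
  unfold TendstoL1On at *
  refine tendsto_of_tendsto_of_tendsto_of_le_of_le tendsto_const_nhds
    (by simpa using hu.add hv) (fun _ => bot_le) fun i => ?_
  dsimp only
  rw [← lintegral_add_left (by fun_prop)]
  refine lintegral_mono fun x => (ENNReal.ofReal_le_ofReal ?_).trans ENNReal.ofReal_add_le
  rw [Pi.add_apply, add_sub_add_comm]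
  exact abs_add_le _ _

theorem TendstoL1LocOn.add {μ : Measure X} {A : Set X} {u v : ℕ → X → ℝ} {f g : X → ℝ}
    (hu : TendstoL1LocOn μ A u f) (hv : TendstoL1LocOn μ A v g) (hum : ∀ i, Measurable (u i))
    (hf : Measurable f) : TendstoL1LocOn μ A (fun i x => u i x + v i x) (f + g) :=
  fun K hKA hK => (hu K hKA hK).add (hv K hKA hK) hum hf

theorem TendstoL1LocOn.mono {μ : Measure X} {A B : Set X} {u : ℕ → X → ℝ} {f : X → ℝ}
    (hu : TendstoL1LocOn μ A u f) (hBA : B ⊆ A) : TendstoL1LocOn μ B u f :=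
  fun K hKB hK => hu K (hKB.trans hBA) hK

section Perimeter

variable {μ : Measure X} {E F A : Set X}

theorem perim_le_liminf {u : ℕ → X → ℝ} (hu : ∀ i, LocLipschitzOn (u i) A)
    (hL : TendstoL1LocOn μ A u (E.indicator 1)) :
    perim μ E A ≤ liminf (fun i => ∫⁻ x in A, lipSlope (u i) x ∂μ) atTop :=
  iInf_le_of_le u <| iInf_le_of_le hu <| iInf_le _ hL

theorem exists_seq_lintegral_lipSlope_lt {c : ℝ≥0∞} (h : perim μ E A < c) :
    ∃ u : ℕ → X → ℝ, (∀ i, LocLipschitzOn (u i) A) ∧ TendstoL1LocOn μ A u (E.indicator 1) ∧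
      ∀ i, ∫⁻ x in A, lipSlope (u i) x ∂μ < c := by
  simp only [perim, iInf_lt_iff] at h
  obtain ⟨u, hu, hL, hlt⟩ := h
  obtain ⟨φ, hφ, hφc⟩ :=
    extraction_of_frequently_atTop (frequently_lt_of_liminf_lt (by isBoundedDefault) hlt)
  exact ⟨u ∘ φ, fun i => hu (φ i), fun K hKA hK => (hL K hKA hK).comp hφ.tendsto_atTop, hφc⟩

theorem perim_mono {B : Set X} (hAB : A ⊆ B) : perim μ E A ≤ perim μ E B :=
  le_iInf fun u => le_iInf fun hu => le_iInf fun hL =>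
    (perim_le_liminf (fun i => (hu i).mono hAB) (hL.mono hAB)).trans
      (liminf_le_liminf (Eventually.of_forall fun _ => lintegral_mono_set hAB))

theorem Perim_union_le [BorelSpace X] (hE : MeasurableSet E) (hd : Disjoint E F) :
    Perim μ (E ∪ F) ≤ Perim μ E + Perim μ F := by
  refine ENNReal.le_add_of_forall_lt fun a ha b hb => ?_
  obtain ⟨u, hu, huL, hua⟩ := exists_seq_lintegral_lipSlope_lt ha
  obtain ⟨v, hv, hvL, hvb⟩ := exists_seq_lintegral_lipSlope_lt hb
  have hcont (i : ℕ) : Continuous (u i) := continuousOn_univ.1 (hu i).continuousOn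
  refine (perim_le_liminf (fun i => (hu i).add (hv i)) ?_).trans
    (liminf_le_of_frequently_le' (Frequently.of_forall fun i => ?_))
  · rw [indicator_union_of_disjoint hd]
    exact huL.add hvL (fun i => (hcont i).measurable) (measurable_one.indicator hE)
  · calc ∫⁻ x in univ, lipSlope (fun y => u i y + v i y) x ∂μ
        ≤ ∫⁻ x in univ, lipSlope (u i) x + lipSlope (v i) x ∂μ :=
          lintegral_mono fun x => lipSlope_add_le _ _ x
      _ = (∫⁻ x in univ, lipSlope (u i) x ∂μ) + ∫⁻ x in univ, lipSlope (v i) x ∂μ :=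
          lintegral_add_left (measurable_lipSlope (hcont i)) _
      _ ≤ a + b := add_le_add (hua i).le (hvb i).le

theorem CutProperty.frequently_Perim_inter_ball_le (hcut : CutProperty μ)
    (hE : MeasurableSet E) (hμE : μ E ≠ ⊤) (hPE : Perim μ E ≠ ⊤) (o : X) {ε : ℝ} (hε : 0 < ε) :
    ∃ᶠ r in atTop, Perim μ (E ∩ ball o r) ≤ Perim μ E + ENNReal.ofReal ε := by
  set m : ℝ → ℝ := fun s => (μ (E ∩ ball o s)).toReal
  have hm : Monotone m := fun s t hst =>
    ENNReal.toReal_mono (ne_top_of_le_ne_top hμE (measure_mono inter_subset_left))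
      (measure_mono (inter_subset_inter_right E (ball_subset_ball hst)))
  have hbdd : BddAbove (range m) := ⟨(μ E).toReal,
    forall_mem_range.2 fun s => ENNReal.toReal_mono hμE (measure_mono inter_subset_left)⟩
  refine frequently_atTop.2 fun R => ?_
  obtain ⟨r, hRr, hcut_r, hderiv⟩ := hm.exists_gt_mem_deriv_le hbdd
    (S := {r | Perim μ (E ∩ ball o r) ≤ perim μ E (ball o r) + ENNReal.ofReal (deriv m r)})
    (ae_restrict_of_ae_restrict_of_subset (Ioi_subset_Ioi (le_max_right R 0))
      ((hcut E hE hPE o).mono fun _ h => h.1)) hε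
  exact ⟨r, (le_max_left R 0).trans hRr.le,
    hcut_r.trans (add_le_add (perim_mono (subset_univ _)) (ENNReal.ofReal_le_ofReal hderiv))⟩

end Perimeter

theorem tendsto_measure_inter_ball_atTop (μ : Measure X) (E : Set X) (o : X) :
    Tendsto (fun r : ℝ => μ (E ∩ ball o r)) atTop (𝓝 (μ E)) := by
  have hmono : Monotone fun r : ℝ => E ∩ ball o r :=
    fun r s h => inter_subset_inter_right E (ball_subset_ball h)
  have hcover : ⋃ r : ℝ, E ∩ ball o r = E := by
    rw [← inter_iUnion, iUnion_eq_univ_iff.2 fun x => ⟨dist x o + 1, by simp⟩, inter_univ]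
  simpa [hcover, Function.comp_def] using tendsto_measure_iUnion_atTop (μ := μ) hmono

def EscapesToInfinity (F : ℕ → Set X) : Prop :=
  ∀ (x : X) (r : ℝ), 0 < r → ∀ᶠ i in atTop, F i ∩ ball x r = ∅

theorem EscapesToInfinity.eventually_disjoint {X : Type*} [MetricSpace X] {F : ℕ → Set X}
    (hF : EscapesToInfinity F) {G : Set X} (hG : Bornology.IsBounded G) :
    ∀ᶠ i in atTop, Disjoint G (F i) := by
  rcases G.eq_empty_or_nonempty with rfl | ⟨x, -⟩
  · simp
  obtain ⟨r, hr, hGr⟩ := hG.subset_ball_lt 0 x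
  filter_upwards [hF x r hr] with i hi
  exact (disjoint_iff_inter_eq_empty.2 (by rwa [inter_comm])).mono_left hGr

theorem toReal_mem_profileDomain {X : Type*} [MeasurableSpace X] {μ : Measure X} {a : ℝ≥0∞}
    (h0 : 0 < a) (h : a < μ univ) : a.toReal ∈ profileDomain μ :=
  ⟨ENNReal.toReal_pos h0.ne' h.ne_top, by rwa [ENNReal.ofReal_toReal h.ne_top]⟩

section Profile

variable {μ : Measure X}

theorem isoProfile_toReal_le_Perim {E : Set X} (hE : MeasurableSet E) (hμE : μ E ≠ ⊤) :
    isoProfile μ (μ E).toReal ≤ Perim μ E :=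
  iInf_le_of_le E <| iInf_le_of_le hE <| iInf_le _ (ENNReal.ofReal_toReal hμE).symm

theorem le_isoProfile_add_isoProfileAtInfty {a : ℝ≥0∞} {V₁ V₂ : ℝ}
    (h : ∀ E, MeasurableSet E → μ E = ENNReal.ofReal V₁ → ∀ F : ℕ → Set X,
      (∀ i, MeasurableSet (F i)) → Tendsto (fun i => μ (F i)) atTop (𝓝 (ENNReal.ofReal V₂)) →
      EscapesToInfinity F → a ≤ Perim μ E + liminf (fun i => Perim μ (F i)) atTop) :
    a ≤ isoProfile μ V₁ + isoProfileAtInfty μ V₂ := by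
  simp only [isoProfile, isoProfileAtInfty, ENNReal.iInf_add, ENNReal.add_iInf, le_iInf_iff]
  intro F hF hFV hesc E hE hEV
  exact h E hE hEV F hF hFV hesc

theorem isoProfile_add_le_of_isBounded [BorelSpace X]
    (hlsc : LowerSemicontinuousOn (fun V : ℝ => isoProfile μ V) (profileDomain μ))
    {G : Set X} (hG : MeasurableSet G) (hGb : Bornology.IsBounded G) {F : ℕ → Set X}
    (hF : ∀ i, MeasurableSet (F i)) (hesc : EscapesToInfinity F) {v : ℝ≥0∞}
    (hv : Tendsto (fun i => μ (F i)) atTop (𝓝 v)) (hpos : 0 < μ G + v)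
    (hlt : μ G + v < μ univ) :
    isoProfile μ (μ G + v).toReal ≤ Perim μ G + liminf (fun i => Perim μ (F i)) atTop := by
  have hdisj := hesc.eventually_disjoint hGb
  have hvol : Tendsto (fun i => μ (G ∪ F i)) atTop (𝓝 (μ G + v)) :=
    (hv.const_add _).congr' (hdisj.mono fun i hi => (measure_union hi (hF i)).symm)
  have hdom : ∀ᶠ i in atTop, 0 < μ (G ∪ F i) ∧ μ (G ∪ F i) < μ univ :=
    (hvol.eventually (lt_mem_nhds hpos)).and (hvol.eventually (gt_mem_nhds hlt))
  calc isoProfile μ (μ G + v).toReal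
      ≤ liminf (fun i => isoProfile μ (μ (G ∪ F i)).toReal) atTop :=
        hlsc.le_liminf_comp (toReal_mem_profileDomain hpos hlt)
          (hdom.mono fun i hi => toReal_mem_profileDomain hi.1 hi.2)
          ((ENNReal.tendsto_toReal hlt.ne_top).comp hvol)
    _ ≤ liminf (fun i => Perim μ (G ∪ F i)) atTop :=
        liminf_le_liminf (hdom.mono fun i hi =>
          isoProfile_toReal_le_Perim (hG.union (hF i)) hi.2.ne_top)
    _ ≤ liminf (fun i => Perim μ G + Perim μ (F i)) atTop :=
        liminf_le_liminf (hdisj.mono fun i hi => Perim_union_le hG hi)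
    _ = Perim μ G + liminf (fun i => Perim μ (F i)) atTop :=
        liminf_const_add _ _ _ (by isBoundedDefault) (by isBoundedDefault)

theorem isoProfile_add_le_of_cutProperty [BorelSpace X] (hcut : CutProperty μ)
    (hlsc : LowerSemicontinuousOn (fun V : ℝ => isoProfile μ V) (profileDomain μ))
    {E : Set X} (hE : MeasurableSet E) {F : ℕ → Set X}
    (hF : ∀ i, MeasurableSet (F i)) (hesc : EscapesToInfinity F) {v : ℝ≥0∞}
    (hv : Tendsto (fun i => μ (F i)) atTop (𝓝 v)) (hpos : 0 < μ E + v)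
    (hlt : μ E + v < μ univ) :
    isoProfile μ (μ E + v).toReal ≤ Perim μ E + liminf (fun i => Perim μ (F i)) atTop := by
  rcases eq_or_ne (Perim μ E) ⊤ with hPE | hPE
  · simp [hPE]
  obtain ⟨o, -⟩ := nonempty_of_measure_ne_zero (ne_bot_of_gt hlt)
  have hμE : μ E ≠ ⊤ := (le_self_add.trans_lt hlt).ne_top
  refine ENNReal.le_of_forall_pos_le_add fun ε hε _ => ?_
  obtain ⟨r, hr, hrP⟩ := exists_seq_forall_of_frequently
    (hcut.frequently_Perim_inter_ball_le hE hμE hPE o (NNReal.coe_pos.2 hε))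
  have hvol : Tendsto (fun n => μ (E ∩ ball o (r n)) + v) atTop (𝓝 (μ E + v)) :=
    ((tendsto_measure_inter_ball_atTop μ E o).comp hr).add_const v
  have hlt' (n : ℕ) : μ (E ∩ ball o (r n)) + v < μ univ :=
    (add_le_add (measure_mono inter_subset_left) le_rfl).trans_lt hlt
  have hpos' : ∀ᶠ n in atTop, 0 < μ (E ∩ ball o (r n)) + v :=
    hvol.eventually (lt_mem_nhds hpos)
  calc isoProfile μ (μ E + v).toReal
      ≤ liminf (fun n => isoProfile μ (μ (E ∩ ball o (r n)) + v).toReal) atTop :=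
        hlsc.le_liminf_comp (toReal_mem_profileDomain hpos hlt)
          (hpos'.mono fun n hn => toReal_mem_profileDomain hn (hlt' n))
          ((ENNReal.tendsto_toReal hlt.ne_top).comp hvol)
    _ ≤ liminf (fun n => Perim μ (E ∩ ball o (r n)) + liminf (fun i => Perim μ (F i)) atTop)
          atTop :=
        liminf_le_liminf (hpos'.mono fun n hn => isoProfile_add_le_of_isBounded hlsc
          (hE.inter measurableSet_ball) (isBounded_ball.subset inter_subset_right) hF hesc hv hn
          (hlt' n))
    _ ≤ Perim μ E + ε + liminf (fun i => Perim μ (F i)) atTop :=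
        liminf_le_of_frequently_le' (Frequently.of_forall fun n => by
          simpa using add_le_add (hrP n) le_rfl)
    _ = Perim μ E + liminf (fun i => Perim μ (F i)) atTop + ε := add_right_comm _ _ _

end Profile

theorem isoProfile_subadditive_at_infinity_general
    {X : Type*} [MetricSpace X] [MeasurableSpace X] [BorelSpace X]
    (μ : Measure X)
    (hcut : CutProperty μ)
    (hlsc : LowerSemicontinuousOn (fun V : ℝ => isoProfile μ V) (profileDomain μ))
    (V : ℝ) (hV : V ∈ profileDomain μ)
    (V₁ V₂ : ℝ) (hV₁ : 0 ≤ V₁) (hV₂ : 0 ≤ V₂) (hsum : V₁ + V₂ = V) :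
    isoProfile μ V ≤ isoProfile μ V₁ + isoProfileAtInfty μ V₂ := by
  refine le_isoProfile_add_isoProfileAtInfty fun E hE hEV F hF hFV hesc => ?_
  have hvol : μ E + ENNReal.ofReal V₂ = ENNReal.ofReal V := by
    rw [hEV, ← ENNReal.ofReal_add hV₁ hV₂, hsum]
  have := isoProfile_add_le_of_cutProperty hcut hlsc hE hF hesc hFV
    (hvol ▸ ENNReal.ofReal_pos.2 hV.1) (hvol ▸ hV.2)
  rwa [hvol, ENNReal.toReal_ofReal hV.1.le] at this

/-- **Subadditivity of the isoperimetric profile against the profile at infinity.**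
Let `(X, d, μ)` be a noncompact metric measure space satisfying the cut property, and
assume the isoperimetric profile `I_X` is lower semicontinuous on `(0, μ(X))`. Then for
every `V ∈ (0, μ(X))` and all `V₁, V₂ ≥ 0` with `V₁ + V₂ = V` one has
`I_X(V) ≤ I_X(V₁) + I^∞_X(V₂)` (with the conventions `I_X(0) := 0` and `I^∞_X(0) := 0`,
which hold for the definitions used here since the empty set has zero measure and zero
perimeter). -/
theorem isoProfile_subadditive_at_infinity
    {X : Type*} [MetricSpace X] [MeasurableSpace X] [BorelSpace X]
    [LocallyCompactSpace X] [TopologicalSpace.SeparableSpace X] [NoncompactSpace X]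
    (μ : Measure X) (hfin : FiniteOnBounded μ) (hsupp : FullSupport μ)
    (hcut : CutProperty μ)
    (hlsc : LowerSemicontinuousOn (fun V : ℝ => isoProfile μ V) (profileDomain μ))
    (V : ℝ) (hV : V ∈ profileDomain μ)
    (V₁ V₂ : ℝ) (hV₁ : 0 ≤ V₁) (hV₂ : 0 ≤ V₂) (hsum : V₁ + V₂ = V) :
    isoProfile μ V ≤ isoProfile μ V₁ + isoProfileAtInfty μ V₂ :=
  isoProfile_subadditive_at_infinity_general μ hcut hlsc V hV V₁ V₂ hV₁ hV₂ hsum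

end
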